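/- Let ⟨W,≤⟩ be a linear order (a reflexive, transitive, antisymmetric, total relation) containing an infinite ascending chain w₀ ≤ w₁ ≤ w₂ ≤ ⋯ of pairwise distinct elements of W. Then there exists a function f : ℕ×ℕ → T satisfying (T1) and (T2) if and only if ¬B is not valid on the frame ⟨W,≤⟩ (equivalently, if and only if B is satisfiable on ⟨W,≤⟩). -/

import Mathlib

namespace FOML

/-- First-order modal formulas over a signature assigning to each arity `n` a type
`Pred n` of `n`-ary predicate letters; individual variables are indexed by `ℕ`.
(0-ary predicate letters are proposition letters.) -/
inductive Fml (Pred : ℕ → Type) : Type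
  | atom : {n : ℕ} → Pred n → (Fin n → ℕ) → Fml Pred
  | bot  : Fml Pred
  | imp  : Fml Pred → Fml Pred → Fml Pred
  | box  : Fml Pred → Fml Pred
  | all  : ℕ → Fml Pred → Fml Pred

namespace Fml

variable {Pred : ℕ → Type}

def neg (φ : Fml Pred) : Fml Pred := imp φ bot
def top : Fml Pred := neg bot
def and (φ ψ : Fml Pred) : Fml Pred := neg (imp φ (neg ψ))
def or (φ ψ : Fml Pred) : Fml Pred := imp (neg φ) ψ
def iff (φ ψ : Fml Pred) : Fml Pred := and (imp φ ψ) (imp ψ φ)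
def dia (φ : Fml Pred) : Fml Pred := neg (box (neg φ))
def ex (x : ℕ) (φ : Fml Pred) : Fml Pred := neg (all x (neg φ))

def bigAnd : List (Fml Pred) → Fml Pred
  | [] => top
  | φ :: l => and φ (bigAnd l)

def bigOr : List (Fml Pred) → Fml Pred
  | [] => bot
  | φ :: l => or φ (bigOr l)

/-- Iterated box: `□⁰φ = φ`, `□ⁿ⁺¹φ = □□ⁿφ`. -/
def boxN : ℕ → Fml Pred → Fml Pred
  | 0, φ => φ
  | n + 1, φ => box (boxN n φ)

/-- Replace every occurrence of `□` by `□⁺`, where `□⁺ψ = ψ ∧ □ψ`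
(equivalently, every `◇` by its dual `◇⁺ψ = ◇ψ ∨ ψ`). -/
def plus : Fml Pred → Fml Pred
  | atom P a => atom P a
  | bot => bot
  | imp φ ψ => imp (plus φ) (plus ψ)
  | box φ => and (plus φ) (box (plus φ))
  | all x φ => all x (plus φ)

end Fml

/-- A Kripke model with expanding domains based on the frame `⟨W, R⟩`:
a domain function `D` into nonempty subsets of the domain `Dom`, expanding along `R`,
and an interpretation `I` of predicate letters at each world, with
`I(w,P) ⊆ D(w)ⁿ` for `n`-ary `P`. -/
structure KModel (W : Type*) (R : W → W → Prop) (Pred : ℕ → Type) where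
  Dom : Type
  D : W → Set Dom
  D_ne : ∀ w, (D w).Nonempty
  D_mono : ∀ ⦃w v : W⦄, R w v → D w ⊆ D v
  I : W → (n : ℕ) → Pred n → (Fin n → Dom) → Prop
  I_dom : ∀ (w : W) (n : ℕ) (P : Pred n) (as : Fin n → Dom), I w n P as → ∀ i, as i ∈ D w

variable {W : Type*} {R : W → W → Prop} {Pred : ℕ → Type}

/-- Truth of a formula at a world of a Kripke model under an assignment. -/
def truth (M : KModel W R Pred) : Fml Pred → W → (ℕ → M.Dom) → Prop
  | .atom (n := n) P args, w, g => M.I w n P (fun i => g (args i))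
  | .bot, _, _ => False
  | .imp φ ψ, w, g => truth M φ w g → truth M ψ w g
  | .box φ, w, g => ∀ v : W, R w v → truth M φ v g
  | .all x φ, w, g => ∀ d ∈ M.D w, truth M φ w (Function.update g x d)

/-- A formula is true at a world `w` if it is true under every assignment
taking values in the domain of `w`. -/
def trueAt (M : KModel W R Pred) (w : W) (φ : Fml Pred) : Prop :=
  ∀ g : ℕ → M.Dom, (∀ x, g x ∈ M.D w) → truth M φ w g

/-- `φ ∈ L(W,R)`: validity on the frame `⟨W,R⟩` (truth in every model with
expanding domains based on it, at every world). -/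
def ValidOn (R : W → W → Prop) (φ : Fml Pred) : Prop :=
  ∀ (M : KModel W R Pred) (w : W), trueAt M w φ

/-- The model has (globally) constant domains. -/
def ConstDom (M : KModel W R Pred) : Prop := ∀ w v : W, M.D w = M.D v

/-- `φ ∈ L_c(W,R)`: truth in every model with constant domains based on `⟨W,R⟩`. -/
def ValidOnC (R : W → W → Prop) (φ : Fml Pred) : Prop :=
  ∀ (M : KModel W R Pred), ConstDom M → ∀ w : W, trueAt M w φ

/-- A finite set `T = {t₀, …, t_s}` of tile types (represented as `Fin (s+1)`, with
`t₀ = 0`), each with four edge colours. -/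
structure TileSet where
  s : ℕ
  left : Fin (s + 1) → ℕ
  right : Fin (s + 1) → ℕ
  up : Fin (s + 1) → ℕ
  down : Fin (s + 1) → ℕ

namespace TileSet

/-- (T1): colours match horizontally. -/
def T1 (ts : TileSet) (f : ℕ → ℕ → Fin (ts.s + 1)) : Prop :=
  ∀ n m : ℕ, ts.right (f n m) = ts.left (f (n + 1) m)

/-- (T2): colours match vertically. -/
def T2 (ts : TileSet) (f : ℕ → ℕ → Fin (ts.s + 1)) : Prop :=
  ∀ n m : ℕ, ts.up (f n m) = ts.down (f n (m + 1))

/-- (T3): the tile type `t₀` occurs infinitely often in the leftmost column. -/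
def T3 (ts : TileSet) (f : ℕ → ℕ → Fin (ts.s + 1)) : Prop :=
  {m : ℕ | f 0 m = 0}.Infinite

end TileSet

/-- The predicate letters used in the encoding: a binary letter `◁`; monadic letters
`M`, `P₀, …, P_{s+2}` and `P`; proposition letters `p` and `q`. -/
inductive Letter (s : ℕ) : ℕ → Type
  | lt : Letter s 2
  | M : Letter s 1
  | P : Fin (s + 3) → Letter s 1
  | Pm : Letter s 1
  | p : Letter s 0
  | q : Letter s 0

namespace Enc

/-- Formulas in the language of the encoding. -/
abbrev F (ts : TileSet) := Fml (Letter ts.s)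

/-- The list of all tile types. -/
def tiles (ts : TileSet) : List (Fin (ts.s + 1)) := List.finRange (ts.s + 1)

/-- Tile indices regarded as indices of the letters `P₀, …, P_{s+2}`. -/
def tl (ts : TileSet) (t : Fin (ts.s + 1)) : Fin (ts.s + 3) := ⟨t.1, by omega⟩

def pp (ts : TileSet) : F ts := .atom Letter.p Fin.elim0
def qq (ts : TileSet) : F ts := .atom Letter.q Fin.elim0
def Mx (ts : TileSet) (v : ℕ) : F ts := .atom Letter.M (fun _ => v)
def Px (ts : TileSet) (j : Fin (ts.s + 3)) (v : ℕ) : F ts := .atom (Letter.P j) (fun _ => v)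
def PP (ts : TileSet) (v : ℕ) : F ts := .atom Letter.Pm (fun _ => v)
def ltA (ts : TileSet) (v w : ℕ) : F ts := .atom Letter.lt ![v, w]

/-- `⟐φ = ◇(π ∧ ◇(¬π ∧ φ))`, for a "marker" formula `π` (the paper uses `π = p`,
and `π = ∀x P(x)` for the operator `⊡`). -/
def pdia (ts : TileSet) (π φ : F ts) : F ts := .dia (.and π (.dia (.and (.neg π) φ)))

/-- Iterated `⟐`. -/
def pdiaN (ts : TileSet) (π : F ts) : ℕ → F ts → F ts
  | 0, φ => φ
  | n + 1, φ => pdia ts π (pdiaN ts π n φ)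

/-- `U(x) = ⋀_{t ∈ T} ¬P_t(x)`, with the tile letters given by `Pf`. -/
def Ug (ts : TileSet) (Pf : Fin (ts.s + 1) → ℕ → F ts) (v : ℕ) : F ts :=
  .bigAnd ((tiles ts).map (fun t => .neg (Pf t v)))

/- The conjuncts of the formula `A`, parametrised by the formulas standing for
`x ◁ y` (`rel`), `M(x)` (`Mf`), `P_t(x)` (`Pf`) and `p` (`pf`); the individual
variables `x`, `y` are `0`, `1`. -/

/-- `A₀ = ∃x □U(x)` -/
def A0g (ts : TileSet) (Pf : Fin (ts.s + 1) → ℕ → F ts) : F ts :=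
  .ex 0 (.box (Ug ts Pf 0))

/-- `A₁ = ∃x(¬U(x) ∧ M(x))` -/
def A1g (ts : TileSet) (Mf : ℕ → F ts) (Pf : Fin (ts.s + 1) → ℕ → F ts) : F ts :=
  .ex 0 (.and (.neg (Ug ts Pf 0)) (Mf 0))

/-- `A₂ = ∀x∃y (x ◁ y)` -/
def A2g (ts : TileSet) (rel : ℕ → ℕ → F ts) : F ts := .all 0 (.ex 1 (rel 0 1))

/-- `A₃ = ∀x∀y(x◁y → □(∃x M(x) → x◁y))` -/
def A3g (ts : TileSet) (rel : ℕ → ℕ → F ts) (Mf : ℕ → F ts) : F ts :=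
  .all 0 (.all 1 (.imp (rel 0 1) (.box (.imp (.ex 0 (Mf 0)) (rel 0 1)))))

/-- `A₄ = ∀x∀y(x◁y → □(M(x) ↔ ¬p ∧ ⟐M(y) ∧ ¬⟐²M(y)))` -/
def A4g (ts : TileSet) (rel : ℕ → ℕ → F ts) (Mf : ℕ → F ts) (pf : F ts) : F ts :=
  .all 0 (.all 1 (.imp (rel 0 1)
    (.box (.iff (Mf 0)
      (.and (.neg pf) (.and (pdia ts pf (Mf 1)) (.neg (pdiaN ts pf 2 (Mf 1)))))))))

/-- `A₅ = ∀x∀y □⋀_{t∈T}(M(x) ∧ P_t(y) → □(M(x) → P_t(y)))` -/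
def A5g (ts : TileSet) (Mf : ℕ → F ts) (Pf : Fin (ts.s + 1) → ℕ → F ts) : F ts :=
  .all 0 (.all 1 (.box (.bigAnd ((tiles ts).map fun t =>
    .imp (.and (Mf 0) (Pf t 1)) (.box (.imp (Mf 0) (Pf t 1)))))))

/-- `A₆ = ∀x □⋀_{t∈T}(P_t(x) → ⋀_{t'≠t} ¬P_{t'}(x))` -/
def A6g (ts : TileSet) (Pf : Fin (ts.s + 1) → ℕ → F ts) : F ts :=
  .all 0 (.box (.bigAnd ((tiles ts).map fun t =>
    .imp (Pf t 0)
      (.bigAnd (((tiles ts).filter (fun t' => decide (t' ≠ t))).map fun t' => .neg (Pf t' 0))))))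

/-- `A₇ = ∀x∀y □⋀_{t∈T}(x◁y ∧ P_t(x) → ⋁_{right(t)=left(t')} P_{t'}(y))` -/
def A7g (ts : TileSet) (rel : ℕ → ℕ → F ts) (Pf : Fin (ts.s + 1) → ℕ → F ts) : F ts :=
  .all 0 (.all 1 (.box (.bigAnd ((tiles ts).map fun t =>
    .imp (.and (rel 0 1) (Pf t 0))
      (.bigOr (((tiles ts).filter fun t' => decide (ts.right t = ts.left t')).map
        fun t' => Pf t' 1))))))

/-- `A₈ = ∀x∀y □⋀_{t∈T}(M(x) ∧ P_t(y) → □(∃y(x◁y ∧ M(y)) → ⋁_{up(t)=down(t')} P_{t'}(y)))` -/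
def A8g (ts : TileSet) (rel : ℕ → ℕ → F ts) (Mf : ℕ → F ts)
    (Pf : Fin (ts.s + 1) → ℕ → F ts) : F ts :=
  .all 0 (.all 1 (.box (.bigAnd ((tiles ts).map fun t =>
    .imp (.and (Mf 0) (Pf t 1))
      (.box (.imp (.ex 1 (.and (rel 0 1) (Mf 1)))
        (.bigOr (((tiles ts).filter fun t' => decide (ts.up t = ts.down t')).map
          fun t' => Pf t' 1))))))))

/-- `A₉ = ∀x(M(x) → □⟐P_{t₀}(x))` -/
def A9g (ts : TileSet) (Mf : ℕ → F ts) (Pf : Fin (ts.s + 1) → ℕ → F ts) (pf : F ts) : F ts :=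
  .all 0 (.imp (Mf 0) (.box (pdia ts pf (Pf 0 0))))

/-- The list `[A₀, …, A₈]` (all conjuncts of `A` except `A₉`), parametrised. -/
def AlistB (ts : TileSet) (rel : ℕ → ℕ → F ts) (Mf : ℕ → F ts)
    (Pf : Fin (ts.s + 1) → ℕ → F ts) (pf : F ts) : List (F ts) :=
  [A0g ts Pf, A1g ts Mf Pf, A2g ts rel, A3g ts rel Mf, A4g ts rel Mf pf,
   A5g ts Mf Pf, A6g ts Pf, A7g ts rel Pf, A8g ts rel Mf Pf]

/-- The tile letters `P_{t₀}, …, P_{t_s}`, i.e. `P₀, …, P_s`. -/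
def PfA (ts : TileSet) : Fin (ts.s + 1) → ℕ → F ts := fun t v => Px ts (tl ts t) v

/-- The formula `A`: the conjunction of `A₀` through `A₉`. -/
def A (ts : TileSet) : F ts :=
  .bigAnd (AlistB ts (ltA ts) (Mx ts) (PfA ts) (pp ts) ++
    [A9g ts (Mx ts) (PfA ts) (pp ts)])

/-- The formula `B`: the conjunction of `A₀` through `A₈`. -/
def B (ts : TileSet) : F ts := .bigAnd (AlistB ts (ltA ts) (Mx ts) (PfA ts) (pp ts))

/-- `A₉• = ∀x(M(x) → □(∃y M(y) → ⟐(∃y M(y) → P_{t₀}(x))))` -/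
def A9bul (ts : TileSet) : F ts :=
  .all 0 (.imp (Mx ts 0) (.box (.imp (.ex 1 (Mx ts 1))
    (pdia ts (pp ts) (.imp (.ex 1 (Mx ts 1)) (PfA ts 0 0))))))

/-- The formula `A•`: the conjunction of `A₀` through `A₈` together with `A₉•`. -/
def Abullet (ts : TileSet) : F ts :=
  .bigAnd (AlistB ts (ltA ts) (Mx ts) (PfA ts) (pp ts) ++ [A9bul ts])

/-- `⟐(P_{s+1}(x) ∧ P_{s+2}(y))`, the formula substituted for `x ◁ y` in `A′`. -/
def relA' (ts : TileSet) (v w : ℕ) : F ts :=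
  pdia ts (pp ts) (.and (Px ts ⟨ts.s + 1, by omega⟩ v) (Px ts ⟨ts.s + 2, by omega⟩ w))

/-- The formula `A′`: the result of substituting `⟐(P_{s+1}(x) ∧ P_{s+2}(y))` for
`x ◁ y` throughout `A`. -/
def A' (ts : TileSet) : F ts :=
  .bigAnd (AlistB ts (relA' ts) (Mx ts) (PfA ts) (pp ts) ++
    [A9g ts (Mx ts) (PfA ts) (pp ts)])

/-- `∀x P(x)`, the marker formula of the operator `⊡`. -/
def pfS (ts : TileSet) : F ts := .all 0 (PP ts 0)

/-- `⊡φ = ◇(∀x P(x) ∧ ◇(¬∀x P(x) ∧ φ))`. -/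
def bdia (ts : TileSet) (φ : F ts) : F ts := pdia ts (pfS ts) φ

/-- Iterated `⊡`. -/
def bdiaN (ts : TileSet) (n : ℕ) (φ : F ts) : F ts := pdiaN ts (pfS ts) n φ

/-- `q ∧ P(v)`, the replacement of `M(v)`. -/
def MS (ts : TileSet) (v : ℕ) : F ts := .and (qq ts) (PP ts v)

/-- `βₙ(x) = ∃y(⊡^{s+4}(q ∧ P(y)) ∧ ¬⊡^{s+5}(q ∧ P(y)) ∧
⊡(⊡^{n+1}(q ∧ P(y)) ∧ ¬⊡^{n+2}(q ∧ P(y)) ∧ P(x)))`, and `βₙ(y)` with `x`, `y` exchanged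
(the variables `x`, `y` are `0`, `1`, so the bound variable is `1 - v`). -/
def beta (ts : TileSet) (n : Fin (ts.s + 3)) (v : ℕ) : F ts :=
  .ex (1 - v) (.and (bdiaN ts (ts.s + 4) (MS ts (1 - v)))
    (.and (.neg (bdiaN ts (ts.s + 5) (MS ts (1 - v))))
      (bdia ts (.and (bdiaN ts ((n : ℕ) + 1) (MS ts (1 - v)))
        (.and (.neg (bdiaN ts ((n : ℕ) + 2) (MS ts (1 - v)))) (PP ts v))))))

/-- The replacement `βₜ` of the tile letters. -/
def PfS (ts : TileSet) : Fin (ts.s + 1) → ℕ → F ts := fun t v => beta ts (tl ts t) v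

/-- `⊡(β_{s+1}(x) ∧ β_{s+2}(y))`, the replacement of `x ◁ y` in `A*`. -/
def relS (ts : TileSet) (v w : ℕ) : F ts :=
  bdia ts (.and (beta ts ⟨ts.s + 1, by omega⟩ v) (beta ts ⟨ts.s + 2, by omega⟩ w))

/-- `A₄* = ∀x∀y(⊡(β_{s+1}(x) ∧ β_{s+2}(y)) →
□(q ∧ P(x) ↔ ¬∀x P(x) ∧ ⊡^{s+4}(q ∧ P(y)) ∧ ¬⊡^{s+5}(q ∧ P(y))))` -/
def A4star (ts : TileSet) : F ts :=
  .all 0 (.all 1 (.imp (relS ts 0 1)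
    (.box (.iff (MS ts 0)
      (.and (.neg (pfS ts))
        (.and (bdiaN ts (ts.s + 4) (MS ts 1)) (.neg (bdiaN ts (ts.s + 5) (MS ts 1)))))))))

/-- `A₉* = ∀x(q ∧ P(x) → □⊡β₀(x))` -/
def A9star (ts : TileSet) : F ts :=
  .all 0 (.imp (MS ts 0) (.box (bdia ts (beta ts ⟨0, by omega⟩ 0))))

/-- The list `[A₀*, …, A₈*]`. -/
def BstarList (ts : TileSet) : List (F ts) :=
  [A0g ts (PfS ts), A1g ts (MS ts) (PfS ts), A2g ts (relS ts), A3g ts (relS ts) (MS ts),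
   A4star ts, A5g ts (MS ts) (PfS ts), A6g ts (PfS ts), A7g ts (relS ts) (PfS ts),
   A8g ts (relS ts) (MS ts) (PfS ts)]

/-- The formula `A*`: the conjunction of `A₀*` through `A₉*`. -/
def Astar (ts : TileSet) : F ts := .bigAnd (BstarList ts ++ [A9star ts])

/-- The formula `B*`: the conjunction of `A₀*` through `A₈*`. -/
def Bstar (ts : TileSet) : F ts := .bigAnd (BstarList ts)

/-- The formula `A⁺`: the result of replacing every `□` in `A*` by `□⁺`. -/
def Aplus (ts : TileSet) : F ts := (Astar ts).plus

/-- The formula `B⁺`: the result of replacing every `□` in `B*` by `□⁺`. -/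
def Bplus (ts : TileSet) : F ts := (Bstar ts).plus

end Enc

end FOML
namespace FOML
open Enc Classical

section TruthLemmas
variable {W : Type*} {R : W → W → Prop} {Pred : ℕ → Type} {M : KModel W R Pred}

@[simp] lemma truth_atom {n : ℕ} (P : Pred n) (args : Fin n → ℕ) (w : W) (g : ℕ → M.Dom) :
    truth M (.atom P args) w g ↔ M.I w n P (fun i => g (args i)) := Iff.rfl

@[simp] lemma truth_bot (w : W) (g : ℕ → M.Dom) : truth M .bot w g ↔ False := Iff.rfl

@[simp] lemma truth_imp (φ ψ : Fml Pred) (w : W) (g : ℕ → M.Dom) :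
    truth M (.imp φ ψ) w g ↔ (truth M φ w g → truth M ψ w g) := Iff.rfl

@[simp] lemma truth_box (φ : Fml Pred) (w : W) (g : ℕ → M.Dom) :
    truth M (.box φ) w g ↔ ∀ v, R w v → truth M φ v g := Iff.rfl

@[simp] lemma truth_all (x : ℕ) (φ : Fml Pred) (w : W) (g : ℕ → M.Dom) :
    truth M (.all x φ) w g ↔ ∀ d ∈ M.D w, truth M φ w (Function.update g x d) := Iff.rfl

@[simp] lemma truth_neg (φ : Fml Pred) (w : W) (g : ℕ → M.Dom) :
    truth M (.neg φ) w g ↔ ¬ truth M φ w g := Iff.rfl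

@[simp] lemma truth_and (φ ψ : Fml Pred) (w : W) (g : ℕ → M.Dom) :
    truth M (.and φ ψ) w g ↔ truth M φ w g ∧ truth M ψ w g := by
  simp only [Fml.and, truth_neg, truth_imp]; tauto

@[simp] lemma truth_or (φ ψ : Fml Pred) (w : W) (g : ℕ → M.Dom) :
    truth M (.or φ ψ) w g ↔ truth M φ w g ∨ truth M ψ w g := by
  simp only [Fml.or, truth_neg, truth_imp]; tauto

@[simp] lemma truth_iff (φ ψ : Fml Pred) (w : W) (g : ℕ → M.Dom) :
    truth M (.iff φ ψ) w g ↔ (truth M φ w g ↔ truth M ψ w g) := by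
  simp only [Fml.iff, truth_and, truth_imp]; tauto

@[simp] lemma truth_dia (φ : Fml Pred) (w : W) (g : ℕ → M.Dom) :
    truth M (.dia φ) w g ↔ ∃ v, R w v ∧ truth M φ v g := by
  simp only [Fml.dia, truth_neg, truth_box]; push_neg; rfl

@[simp] lemma truth_ex (x : ℕ) (φ : Fml Pred) (w : W) (g : ℕ → M.Dom) :
    truth M (.ex x φ) w g ↔ ∃ d ∈ M.D w, truth M φ w (Function.update g x d) := by
  simp only [Fml.ex, truth_neg, truth_all]; push_neg; rfl

@[simp] lemma truth_bigAnd (l : List (Fml Pred)) (w : W) (g : ℕ → M.Dom) :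
    truth M (.bigAnd l) w g ↔ ∀ φ ∈ l, truth M φ w g := by
  induction l with
  | nil => simp [Fml.bigAnd, Fml.top]
  | cons φ l ih => simp [Fml.bigAnd, ih]

@[simp] lemma truth_bigOr (l : List (Fml Pred)) (w : W) (g : ℕ → M.Dom) :
    truth M (.bigOr l) w g ↔ ∃ φ ∈ l, truth M φ w g := by
  induction l with
  | nil => simp [Fml.bigOr]
  | cons φ l ih => simp [Fml.bigOr, ih]

lemma truth_pdia (ts : TileSet) (π φ : F ts) {Mo : KModel W R (Letter ts.s)} (w : W)
    (g : ℕ → Mo.Dom) :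
    truth Mo (pdia ts π φ) w g ↔
      ∃ v, R w v ∧ truth Mo π v g ∧ ∃ u, R v u ∧ ¬ truth Mo π u g ∧ truth Mo φ u g := by
  simp [pdia]

@[simp] lemma args0 {α : Type*} (g : ℕ → α) :
    (fun i : Fin 0 => g (Fin.elim0 i)) = Fin.elim0 := funext fun i => i.elim0

@[simp] lemma args2 {α : Type*} (g : ℕ → α) (a b : ℕ) :
    (fun i => g (![a, b] i)) = ![g a, g b] := by
  funext i; fin_cases i <;> simp

end TruthLemmas
section Rank
variable {W : Type*} (le : W → W → Prop) (c : ℕ → W)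

/-- `v` has finite rank `n`: exactly the chain elements `c 0, …, c (n-1)` lie below it. -/
def rnk (v : W) (n : ℕ) : Prop := (∀ m < n, le (c m) v) ∧ ¬ le (c n) v

variable {le c}

lemma chain_le (hrefl : ∀ a, le a a) (htrans : ∀ a b d, le a b → le b d → le a d)
    (hchain : ∀ n, le (c n) (c (n + 1))) : ∀ {m k : ℕ}, m ≤ k → le (c m) (c k) := by
  intro m k h
  induction k with
  | zero => cases Nat.le_zero.mp h; exact hrefl _
  | succ k ih =>
    rcases Nat.lt_or_ge m (k+1) with h' | h'
    · exact htrans _ _ _ (ih (Nat.lt_succ_iff.mp h')) (hchain k)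
    · cases Nat.le_antisymm h h'; exact hrefl _

lemma rnk_c (hrefl : ∀ a, le a a) (htrans : ∀ a b d, le a b → le b d → le a d)
    (hanti : ∀ a b, le a b → le b a → a = b)
    (hchain : ∀ n, le (c n) (c (n + 1))) (hinj : Function.Injective c)
    (k : ℕ) : rnk le c (c k) (k + 1) := by
  refine ⟨fun m hm => chain_le hrefl htrans hchain (Nat.lt_succ_iff.mp hm), fun h => ?_⟩
  exact hinj.ne (by omega : k + 1 ≠ k) (hanti _ _ h (chain_le hrefl htrans hchain (by omega)))

lemma rnk_unique {v : W} {n n' : ℕ} (h : rnk le c v n) (h' : rnk le c v n') : n = n' := by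
  by_contra hne
  rcases Nat.lt_or_ge n n' with hl | hl
  · exact h.2 (h'.1 n hl)
  · exact h'.2 (h.1 n' (by omega))

lemma rnk_mono (htrans : ∀ a b d, le a b → le b d → le a d)
    {v v' : W} {n n' : ℕ} (hvv : le v v') (h : rnk le c v n) (h' : rnk le c v' n') :
    n ≤ n' := by
  by_contra hl
  exact h'.2 (htrans _ _ _ (h.1 n' (by omega)) hvv)

/-- Anything below a world of finite rank has a finite rank (and it is `≤`). -/
lemma rnk_exists_below (htrans : ∀ a b d, le a b → le b d → le a d)
    {v v' : W} {n' : ℕ} (hvv : le v v') (h' : rnk le c v' n') :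
    ∃ n ≤ n', rnk le c v n := by
  classical
  have hne : ¬ le (c n') v := fun h => h'.2 (htrans _ _ _ h hvv)
  have hex : ∃ m, ¬ le (c m) v := ⟨n', hne⟩
  refine ⟨Nat.find hex, Nat.find_min' hex hne, fun m hm => ?_, Nat.find_spec hex⟩
  by_contra hcon
  exact absurd (Nat.find_min' hex hcon) (by omega)

/-- Every rank `≥ n` is realised above a world of rank `n`. -/
lemma rnk_realize (hrefl : ∀ a, le a a) (htrans : ∀ a b d, le a b → le b d → le a d)
    (hanti : ∀ a b, le a b → le b a → a = b) (htotal : ∀ a b, le a b ∨ le b a)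
    (hchain : ∀ n, le (c n) (c (n + 1))) (hinj : Function.Injective c)
    {v : W} {n : ℕ} (h : rnk le c v n) {j : ℕ} (hj : n ≤ j) :
    ∃ v', le v v' ∧ rnk le c v' j := by
  rcases Nat.eq_or_lt_of_le hj with rfl | hj'
  · exact ⟨v, hrefl v, h⟩
  · obtain ⟨j, rfl⟩ : ∃ j', j = j' + 1 := ⟨j - 1, by omega⟩
    refine ⟨c j, ?_, rnk_c hrefl htrans hanti hchain hinj j⟩
    have hvn : le v (c n) := (htotal v (c n)).resolve_right fun hh => h.2 hh
    exact htrans _ _ _ hvn (chain_le hrefl htrans hchain (by omega))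

end Rank

section Forward
variable {W : Type*} (le : W → W → Prop) (c : ℕ → W) (ts : TileSet)
  (f : ℕ → ℕ → Fin (ts.s + 1))

/-- The model witnessing satisfiability of `B`, built from a tiling `f`. -/
abbrev fwdModel : KModel W le (Letter ts.s) where
  Dom := ℕ
  D _ := Set.univ
  D_ne _ := ⟨0, trivial⟩
  D_mono _ _ _ := subset_rfl
  I v n L as :=
    match L with
    | .lt => (as 0 = 0 ∧ as 1 = 0) ∨ (1 ≤ as 0 ∧ as 1 = as 0 + 1)
    | .M => ∃ k, as 0 = k + 1 ∧ rnk le c v (2 * k + 1)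
    | .P j => ∃ k h, as 0 = k + 1 ∧ rnk le c v (2 * h + 1) ∧ (j : ℕ) = (f k h : ℕ)
    | .Pm => False
    | .p => ∀ n, rnk le c v n → Even n
    | .q => False
  I_dom _ _ _ _ _ _ := trivial

@[simp] lemma fwdModel_Dom : (fwdModel le c ts f).Dom = ℕ := rfl
@[simp] lemma fwdModel_D (w : W) : (fwdModel le c ts f).D w = Set.univ := rfl
@[simp] lemma fwdModel_lt (v : W) (as : Fin 2 → ℕ) :
    (fwdModel le c ts f).I v 2 Letter.lt as ↔
      (as 0 = 0 ∧ as 1 = 0) ∨ (1 ≤ as 0 ∧ as 1 = as 0 + 1) := Iff.rfl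
@[simp] lemma fwdModel_M (v : W) (as : Fin 1 → ℕ) :
    (fwdModel le c ts f).I v 1 Letter.M as ↔ ∃ k, as 0 = k + 1 ∧ rnk le c v (2 * k + 1) :=
  Iff.rfl
@[simp] lemma fwdModel_P (v : W) (j : Fin (ts.s + 3)) (as : Fin 1 → ℕ) :
    (fwdModel le c ts f).I v 1 (Letter.P j) as ↔
      ∃ k h, as 0 = k + 1 ∧ rnk le c v (2 * h + 1) ∧ (j : ℕ) = (f k h : ℕ) := Iff.rfl
@[simp] lemma fwdModel_Pm (v : W) (as : Fin 1 → ℕ) :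
    (fwdModel le c ts f).I v 1 Letter.Pm as ↔ False := Iff.rfl
@[simp] lemma fwdModel_p (v : W) (as : Fin 0 → ℕ) :
    (fwdModel le c ts f).I v 0 Letter.p as ↔ ∀ n, rnk le c v n → Even n := Iff.rfl
@[simp] lemma fwdModel_q (v : W) (as : Fin 0 → ℕ) :
    (fwdModel le c ts f).I v 0 Letter.q as ↔ False := Iff.rfl

end Forward
section ForwardTruth
variable {W : Type*} {le : W → W → Prop} {c : ℕ → W}

/-- Characterisation of `⟐M(K+1)` in the forward model. -/
lemma claimA (hrefl : ∀ a, le a a) (htrans : ∀ a b d, le a b → le b d → le a d)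
    (hanti : ∀ a b, le a b → le b a → a = b) (htotal : ∀ a b, le a b ∨ le b a)
    (hchain : ∀ n, le (c n) (c (n + 1))) (hinj : Function.Injective c)
    (K : ℕ) (v : W) :
    (∃ v', le v v' ∧ (∀ n, rnk le c v' n → Even n) ∧
      ∃ u, le v' u ∧ ¬ (∀ n, rnk le c u n → Even n) ∧ rnk le c u (2 * K + 1)) ↔
    ∃ n, rnk le c v n ∧ n ≤ 2 * K := by
  constructor
  · rintro ⟨v', hvv', hp', u, hv'u, -, hru⟩
    obtain ⟨n', hn'le, hrv'⟩ := rnk_exists_below htrans hv'u hru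
    have hev : Even n' := hp' _ hrv'
    obtain ⟨n, hnle, hrv⟩ := rnk_exists_below htrans hvv' hrv'
    refine ⟨n, hrv, ?_⟩
    rw [Nat.even_iff] at hev; omega
  · rintro ⟨n, hrv, hn⟩
    obtain ⟨j, hjev, hnj, hjle⟩ : ∃ j, Even j ∧ n ≤ j ∧ j ≤ 2 * K := by
      rcases Nat.even_or_odd n with he | ho
      · exact ⟨n, he, Nat.le_refl n, hn⟩
      · refine ⟨n + 1, ?_, by omega, ?_⟩
        · rcases ho with ⟨r, hr⟩; exact ⟨r + 1, by omega⟩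
        · rcases ho with ⟨r, hr⟩; omega
    obtain ⟨v', hvv', hrv'⟩ := rnk_realize hrefl htrans hanti htotal hchain hinj hrv hnj
    refine ⟨v', hvv', fun m hm => by rwa [rnk_unique hm hrv'], c (2 * K), ?_, ?_, ?_⟩
    · have hv'j : le v' (c j) := (htotal v' (c j)).resolve_right fun hh => hrv'.2 hh
      exact htrans _ _ _ hv'j (chain_le hrefl htrans hchain hjle)
    · intro hp
      have := hp _ (rnk_c hrefl htrans hanti hchain hinj (2 * K))
      rw [Nat.even_iff] at this; omega
    · exact rnk_c hrefl htrans hanti hchain hinj (2 * K)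

/-- Characterisation of `⟐(⟐M(K+1))` in the forward model. -/
lemma claimB (hrefl : ∀ a, le a a) (htrans : ∀ a b d, le a b → le b d → le a d)
    (hanti : ∀ a b, le a b → le b a → a = b) (htotal : ∀ a b, le a b ∨ le b a)
    (hchain : ∀ n, le (c n) (c (n + 1))) (hinj : Function.Injective c)
    (K : ℕ) (hK : 1 ≤ K) (v : W) :
    (∃ v', le v v' ∧ (∀ n, rnk le c v' n → Even n) ∧
      ∃ u, le v' u ∧ ¬ (∀ n, rnk le c u n → Even n) ∧ ∃ n, rnk le c u n ∧ n ≤ 2 * K) ↔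
    ∃ n, rnk le c v n ∧ n ≤ 2 * K - 2 := by
  constructor
  · rintro ⟨v', hvv', hp', u, hv'u, hnp, n'', hru, hn''⟩
    have hodd : ¬ Even n'' := by
      intro he
      exact hnp (fun m hm => by rwa [rnk_unique hm hru])
    obtain ⟨n', hn'le, hrv'⟩ := rnk_exists_below htrans hv'u hru
    have hev : Even n' := hp' _ hrv'
    obtain ⟨n, hnle, hrv⟩ := rnk_exists_below htrans hvv' hrv'
    refine ⟨n, hrv, ?_⟩
    rw [Nat.even_iff] at hev
    rw [Nat.even_iff] at hodd
    omega
  · rintro ⟨n, hrv, hn⟩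
    obtain ⟨j, hjev, hnj, hjle⟩ : ∃ j, Even j ∧ n ≤ j ∧ j ≤ 2 * K - 2 := by
      rcases Nat.even_or_odd n with he | ho
      · exact ⟨n, he, Nat.le_refl n, hn⟩
      · rcases ho with ⟨r, hr⟩
        exact ⟨n + 1, ⟨r + 1, by omega⟩, by omega, by omega⟩
    obtain ⟨v', hvv', hrv'⟩ := rnk_realize hrefl htrans hanti htotal hchain hinj hrv hnj
    refine ⟨v', hvv', fun m hm => by rwa [rnk_unique hm hrv'], c (2 * K - 2), ?_, ?_, ?_⟩
    · have hv'j : le v' (c j) := (htotal v' (c j)).resolve_right fun hh => hrv'.2 hh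
      exact htrans _ _ _ hv'j (chain_le hrefl htrans hchain hjle)
    · intro hp
      have := hp _ (rnk_c hrefl htrans hanti hchain hinj (2 * K - 2))
      rw [Nat.even_iff] at this; omega
    · exact ⟨2 * K - 2 + 1, rnk_c hrefl htrans hanti hchain hinj (2 * K - 2), by omega⟩

variable {ts : TileSet} {f : ℕ → ℕ → Fin (ts.s + 1)}

theorem fwd_B (hrefl : ∀ a, le a a) (htrans : ∀ a b d, le a b → le b d → le a d)
    (hanti : ∀ a b, le a b → le b a → a = b) (htotal : ∀ a b, le a b ∨ le b a)
    (hchain : ∀ n, le (c n) (c (n + 1))) (hinj : Function.Injective c)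
    (hT1 : ts.T1 f) (hT2 : ts.T2 f) :
    truth (fwdModel le c ts f) (B ts) (c 0) (fun _ => (0:ℕ)) := by
  classical
  have hrk : ∀ k, rnk le c (c k) (k + 1) := rnk_c hrefl htrans hanti hchain hinj
  simp only [B, AlistB, truth_bigAnd, List.forall_mem_cons, List.forall_mem_nil, and_true]
  refine ⟨?_, ?_, ?_, ?_, ?_, ?_, ?_, ?_, ?_⟩
  · -- A0
    simp [A0g, Ug, PfA, Px, tiles, truth_ex, truth_box, truth_bigAnd, truth_neg,
      truth_atom, List.forall_mem_map, List.mem_finRange, forall_true_left, fwdModel_P,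
      fwdModel_D, Set.mem_univ, true_and, Function.update_apply, if_pos rfl]
    refine ⟨(0:ℕ), fun v _ j k h hk => by omega⟩
  · -- A1
    simp [A1g, Ug, PfA, Px, Mx, tiles, truth_ex, truth_and, truth_neg, truth_bigAnd,
      truth_atom, List.forall_mem_map, List.mem_finRange, forall_true_left, fwdModel_P,
      fwdModel_M, fwdModel_D, Set.mem_univ, true_and, Function.update_apply, if_pos rfl]
    exact ⟨f 0 0, 0, ⟨0, by simpa using hrk 0, rfl⟩, by simpa using hrk 0⟩
  · -- A2
    simp [A2g, ltA, truth_all, truth_ex, truth_atom, args2, fwdModel_lt, fwdModel_D,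
      Set.mem_univ, true_and, Function.update_apply, Matrix.cons_val_zero, Matrix.cons_val_one,
      Matrix.head_cons]
    intro d
    rcases Nat.eq_zero_or_pos d with rfl | h
    · exact ⟨0, Or.inl ⟨rfl, rfl⟩⟩
    · exact ⟨d + 1, Or.inr ⟨h, rfl⟩⟩
  · -- A3
    simp [A3g, ltA, Mx, truth_all, truth_imp, truth_box, truth_ex, truth_atom, args2,
      fwdModel_lt, fwdModel_M, fwdModel_D, Set.mem_univ, true_and, Function.update_apply,
      Matrix.cons_val_zero, Matrix.cons_val_one, Matrix.head_cons]
    exact fun d e h v _ _ _ => h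
  · -- A4
    simp [A4g, pdiaN, pdia, ltA, Mx, pp, truth_dia, args2, args0,
      -not_forall, -not_exists, -Nat.not_even_iff_odd, -not_and]
    rintro d e (⟨rfl, rfl⟩ | ⟨hd, rfl⟩) v hv
    · constructor
      · rintro ⟨k, hk, -⟩; omega
      · rintro ⟨-, ⟨v', -, -, u, -, -, k, hk, -⟩, -⟩; omega
    · obtain ⟨k, rfl⟩ : ∃ k, d = k + 1 := ⟨d - 1, by omega⟩
      have hMe : ∀ u : W, (∃ k', k + 1 + 1 = k' + 1 ∧ rnk le c u (2 * k' + 1)) ↔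
          rnk le c u (2 * (k + 1) + 1) := by
        intro u; constructor
        · rintro ⟨k', hk', h⟩
          obtain rfl : k' = k + 1 := by omega
          exact h
        · exact fun h => ⟨k + 1, rfl, h⟩
      simp only [hMe, claimA hrefl htrans hanti htotal hchain hinj (k + 1),
        claimB hrefl htrans hanti htotal hchain hinj (k + 1) (by omega)]
      constructor
      · rintro ⟨k', hk', hr⟩
        rw [show k' = k from by omega] at hr
        refine ⟨fun hp => ?_, ⟨2 * k + 1, hr, by omega⟩, fun hcon => ?_⟩
        · have := hp _ hr; rw [Nat.even_iff] at this; omega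
        · obtain ⟨n, hn, hnle⟩ := hcon
          have := rnk_unique hn hr; omega
      · rintro ⟨hnp, ⟨n, hn, hnle⟩, hno⟩
        refine ⟨k, rfl, ?_⟩
        have hodd : ¬ Even n := fun he => hnp fun m hm => by rwa [rnk_unique hm hn]
        have hgt : ¬ n ≤ 2 * (k + 1) - 2 := fun hh => hno ⟨n, hn, hh⟩
        rw [Nat.even_iff] at hodd
        obtain rfl : n = 2 * k + 1 := by omega
        exact hn
  · -- A5
    simp [A5g, Mx, PfA, Px, tiles]
    intro d d1 v hv a x hd hr x' hd1 x1 hr1 hteq v1 hvv1 x2 hd2 hr2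
    have e1 : x1 = x := by have := rnk_unique hr1 hr; omega
    have e2 : x2 = x := by omega
    rw [e1] at hteq
    rw [e2] at hr2
    exact ⟨x', hd1, x, hr2, hteq⟩
  · -- A6
    simp [A6g, PfA, Px, tiles]
    intro d v hv a x hd x1 hr1 hteq a4 hne x2 hd2 x3 hr3 hteq4
    have e3 : x3 = x1 := by have := rnk_unique hr3 hr1; omega
    have e2 : x2 = x := by omega
    rw [e3, e2] at hteq4
    exact hne (Fin.ext (hteq4.trans hteq.symm))
  · -- A7
    simp [A7g, ltA, PfA, Px, tiles]
    intro d d1 v hv a hrel x hd x1 hr1 hteq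
    subst hd
    obtain rfl : a = f x x1 := Fin.ext hteq
    rcases hrel with ⟨h0, -⟩ | ⟨-, rfl⟩
    · omega
    · exact ⟨f (x + 1) x1, hT1 x x1, x + 1, rfl, x1, hr1, rfl⟩
  · -- A8
    simp [A8g, ltA, Mx, PfA, Px, tiles]
    intro d d1 v hv a x hd hr x' hd1 x1 hr1 hteq v1 hvv1 hd0 hr2
    subst hd
    have e1 : x1 = x := by have := rnk_unique hr1 hr; omega
    rw [e1] at hteq
    obtain rfl : a = f x' x := Fin.ext hteq
    exact ⟨f x' (x + 1), hT2 x' x, x', hd1, x + 1, hr2, rfl⟩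

end ForwardTruth
section Backward

lemma nat_chain {α : Type*} (P : α → Prop) (Rl : α → α → Prop) (a0 : α) (h0 : P a0)
    (hstep : ∀ a, P a → ∃ b, P b ∧ Rl a b) :
    ∃ d : ℕ → α, d 0 = a0 ∧ (∀ n, P (d n)) ∧ ∀ n, Rl (d n) (d (n + 1)) := by
  classical
  let F : {a // P a} → {a // P a} :=
    fun a => ⟨(hstep a.1 a.2).choose, (hstep a.1 a.2).choose_spec.1⟩
  refine ⟨fun n => (F^[n] ⟨a0, h0⟩).1, rfl, fun n => (F^[n] ⟨a0, h0⟩).2, fun n => ?_⟩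
  show Rl (F^[n] ⟨a0, h0⟩).1 (F^[n + 1] ⟨a0, h0⟩).1
  rw [Function.iterate_succ_apply']
  exact (hstep (F^[n] ⟨a0, h0⟩).1 (F^[n] ⟨a0, h0⟩).2).choose_spec.2

lemma nat_chain_dep {α : Type*} (Rl : α → α → Prop) (Q : ℕ → α → Prop) (a0 : α)
    (h0 : Q 0 a0) (hstep : ∀ n a, Q n a → ∃ b, Rl a b ∧ Q (n + 1) b) :
    ∃ v : ℕ → α, v 0 = a0 ∧ (∀ n, Rl (v n) (v (n + 1))) ∧ ∀ n, Q n (v n) := by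
  classical
  let F : ∀ n, {a // Q n a} → {a // Q (n + 1) a} :=
    fun n a => ⟨(hstep n a.1 a.2).choose, (hstep n a.1 a.2).choose_spec.2⟩
  let v : ∀ n, {a // Q n a} := fun n => Nat.rec ⟨a0, h0⟩ F n
  refine ⟨fun n => (v n).1, rfl, fun n => ?_, fun n => (v n).2⟩
  exact (hstep n (v n).1 (v n).2).choose_spec.1

variable {W : Type*} {le : W → W → Prop} {ts : TileSet}

theorem bwd (hrefl : ∀ a, le a a) (htrans : ∀ a b d, le a b → le b d → le a d)
    {Mo : KModel W le (Letter ts.s)} {w : W} {g : ℕ → Mo.Dom}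
    (hB : truth Mo (B ts) w g) :
    ∃ f : ℕ → ℕ → Fin (ts.s + 1), ts.T1 f ∧ ts.T2 f := by
  classical
  simp only [B, AlistB, truth_bigAnd, List.forall_mem_cons, List.forall_mem_nil,
    and_true] at hB
  obtain ⟨hA0, hA1, hA2, hA3, hA4, hA5, hA6, hA7, hA8⟩ := hB
  clear hA0 hA5
  simp [A1g, Ug, PfA, Px, Mx, tiles] at hA1
  simp [A2g, ltA, args2] at hA2
  simp [A3g, ltA, Mx, args2] at hA3
  simp [A4g, pdiaN, pdia, ltA, Mx, pp, args2, args0, -not_forall, -not_exists,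
    -not_and] at hA4
  simp [A6g, PfA, Px, tiles] at hA6
  simp [A7g, ltA, PfA, Px, args2, tiles] at hA7
  simp [A8g, ltA, Mx, PfA, Px, args2, tiles] at hA8
  obtain ⟨d0, hd0, ⟨t0, ht0⟩, hM0⟩ := hA1
  obtain ⟨d, hd0eq, hdmem, hdlt⟩ :=
    nat_chain (fun a => a ∈ Mo.D w) (fun a b => Mo.I w 2 Letter.lt ![a, b]) d0 hd0
      (fun a ha => hA2 a ha)
  rw [← hd0eq] at hM0 ht0
  have hstepw : ∀ n u, (le w u ∧ Mo.I u 1 Letter.M fun _ => d n) →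
      ∃ u', le u u' ∧ (le w u' ∧ Mo.I u' 1 Letter.M fun _ => d (n + 1)) := by
    rintro n u ⟨hwu, hMu⟩
    have h4 := (hA4 (d n) (hdmem n) (d (n + 1)) (hdmem (n + 1)) (hdlt n) u hwu).mp hMu
    obtain ⟨-, ⟨v1, h1, -, v2, h2, -, hM2⟩, -⟩ := h4
    exact ⟨v2, htrans _ _ _ h1 h2, htrans _ _ _ hwu (htrans _ _ _ h1 h2), hM2⟩
  obtain ⟨v, hv0, hvle, hvQ⟩ :=
    nat_chain_dep le (fun n u => le w u ∧ Mo.I u 1 Letter.M fun _ => d n) w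
      ⟨hrefl w, hM0⟩ hstepw
  have hwv : ∀ n, le w (v n) := fun n => (hvQ n).1
  have hMv : ∀ n, Mo.I (v n) 1 Letter.M fun _ => d n := fun n => (hvQ n).2
  have hLT : ∀ h n, Mo.I (v h) 2 Letter.lt ![d n, d (n + 1)] := fun h n =>
    hA3 (d n) (hdmem n) (d (n + 1)) (hdmem (n + 1)) (hdlt n) (v h) (hwv h)
      (d h) (Mo.D_mono (hwv h) (hdmem h)) (hMv h)
  have hE : ∀ n h, ∃ t, Mo.I (v h) 1 (Letter.P (tl ts t)) fun _ => d n := by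
    intro n
    induction n with
    | zero =>
      intro h
      induction h with
      | zero => exact ⟨t0, by rw [hv0]; exact ht0⟩
      | succ h ih =>
        obtain ⟨t, ht⟩ := ih
        obtain ⟨t', -, ht'⟩ := hA8 (d h) (hdmem h) (d 0) (hdmem 0) (v h) (hwv h) t
          (hMv h) ht (v (h + 1)) (hvle h) (d (h + 1))
          (Mo.D_mono (hwv (h + 1)) (hdmem (h + 1))) (hLT (h + 1) h) (hMv (h + 1))
        exact ⟨t', ht'⟩
    | succ n ih =>
      intro h
      obtain ⟨t, ht⟩ := ih h
      obtain ⟨t', -, ht'⟩ := hA7 (d n) (hdmem n) (d (n + 1)) (hdmem (n + 1)) (v h) (hwv h)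
        t (hLT h n) ht
      exact ⟨t', ht'⟩
  have hU : ∀ n h t t', (Mo.I (v h) 1 (Letter.P (tl ts t)) fun _ => d n) →
      (Mo.I (v h) 1 (Letter.P (tl ts t')) fun _ => d n) → t' = t := by
    intro n h t t' ht ht'
    by_contra hne
    exact hA6 (d n) (hdmem n) (v h) (hwv h) t ht t' hne ht'
  choose f hf using hE
  refine ⟨f, fun n h => ?_, fun n h => ?_⟩
  · obtain ⟨t', hrl, ht'⟩ := hA7 (d n) (hdmem n) (d (n + 1)) (hdmem (n + 1)) (v h) (hwv h)
      (f n h) (hLT h n) (hf n h)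
    rwa [hU (n + 1) h (f (n + 1) h) t' (hf (n + 1) h) ht'] at hrl
  · obtain ⟨t', hud, ht'⟩ := hA8 (d h) (hdmem h) (d n) (hdmem n) (v h) (hwv h) (f n h)
      (hMv h) (hf n h) (v (h + 1)) (hvle h) (d (h + 1))
      (Mo.D_mono (hwv (h + 1)) (hdmem (h + 1))) (hLT (h + 1) h) (hMv (h + 1))
    rwa [hU n (h + 1) (f n (h + 1)) t' (hf n (h + 1)) ht'] at hud

end Backward

/-- let `⟨W,≤⟩` be a linear order containing an infinite ascending chain
of pairwise distinct elements. Then there is a function `f : ℕ×ℕ → T` satisfying (T1)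
and (T2) iff `¬B` is not valid on the frame `⟨W,≤⟩`. -/
theorem statement11 (W : Type*) (le : W → W → Prop)
    (hrefl : ∀ a, le a a)
    (htrans : ∀ a b c, le a b → le b c → le a c)
    (hanti : ∀ a b, le a b → le b a → a = b)
    (htotal : ∀ a b, le a b ∨ le b a)
    (c : ℕ → W) (hchain : ∀ n, le (c n) (c (n + 1))) (hinj : Function.Injective c)
    (ts : TileSet) :
    (∃ f : ℕ → ℕ → Fin (ts.s + 1), ts.T1 f ∧ ts.T2 f) ↔
      ¬ ValidOn le (Fml.neg (B ts)) := by
  constructor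
  · rintro ⟨f, hT1, hT2⟩ hval
    exact hval (fwdModel le c ts f) (c 0) (fun _ => (0 : ℕ)) (fun x => Set.mem_univ _)
      (fwd_B hrefl htrans hanti htotal hchain hinj hT1 hT2)
  · intro hnv
    simp only [ValidOn] at hnv
    push_neg at hnv
    obtain ⟨Mo, w, hw⟩ := hnv
    simp only [trueAt] at hw
    push_neg at hw
    obtain ⟨g, hg, hB⟩ := hw
    rw [truth_neg, not_not] at hB
    exact bwd hrefl htrans hB

end FOML
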